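/- arXiv:1102.1110 — 7 statements merged into one kernel-verified Lean document; each statement's English description precedes it below -/
import Mathlib

section
/- Let u, v : ℝⁿ → ℝ be C² functions with u a classical subsolution of max{λ − Δu − f, |Du| − 1} = 0 and v a classical supersolution of max{μ − Δv − f, |Dv| − 1} = 0 on ℝⁿ, where f : ℝⁿ → ℝ is nonnegative. If limsup_{|x|→∞} u(x)/|x| ≤ 1 ≤ liminf_{|x|→∞} v(x)/|x|, then λ ≤ μ. -/
open Filter
open scoped InnerProductSpace Topology

/-- The Laplacian as the trace of the Hessian. -/
noncomputable def lap {n : ℕ} (u : EuclideanSpace ℝ (Fin n) → ℝ)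
    (x : EuclideanSpace ℝ (Fin n)) : ℝ :=
  ∑ i, fderiv ℝ (fun y => fderiv ℝ u y (EuclideanSpace.single i (1:ℝ))) x
    (EuclideanSpace.single i (1:ℝ))

/-!
For `0 ≤ ε < 1` the gradient bound makes `u` grow at most like `‖x‖`, while `v` grows at least
like `c ‖x‖` for any `c < 1`; hence `ε u - v` attains a global maximum at some `x₀`. There
`Dv = ε Du` has norm `< 1`, so the supersolution inequality for `v` is the PDE one, and
`Δ(ε u - v) ≤ 0` combines with `λ ≤ Δu + f`, `Δv ≤ μ - f` and `f ≥ 0` into `ε λ ≤ μ`.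
Letting `ε → 1` gives `λ ≤ μ`.
-/

theorem IsLocalMax.deriv_deriv_nonpos {g : ℝ → ℝ} {a : ℝ} (h : IsLocalMax g a)
    (hc : ContinuousAt g a) : deriv (deriv g) a ≤ 0 := by
  by_contra! hpos
  -- the second derivative test would make `a` a local minimum too, so `g` is locally constant
  have hmin : IsLocalMin g a := isLocalMin_of_deriv_deriv_pos hpos h.deriv_eq_zero hc
  have hconst : g =ᶠ[𝓝 a] fun _ => g a := by
    filter_upwards [h, hmin] with x hmax hmin using le_antisymm hmax hmin
  have hderiv : deriv g =ᶠ[𝓝 a] fun _ => 0 := by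
    simpa only [deriv_const'] using hconst.deriv
  rw [hderiv.deriv_eq, deriv_const] at hpos
  exact hpos.false

section Directional

variable {E : Type*} [NormedAddCommGroup E] [NormedSpace ℝ E] {w : E → ℝ}

theorem ContDiff.differentiable_fderiv_apply (hw : ContDiff ℝ 2 w) (e : E) :
    Differentiable ℝ (fun y => fderiv ℝ w y e) :=
  ((hw.fderiv_right (m := 1) (by norm_num)).clm_apply contDiff_const).differentiable
    one_ne_zero

theorem IsLocalMax.fderiv_fderiv_apply_nonpos {x₀ : E} (h : IsLocalMax w x₀)
    (hw : ContDiff ℝ 2 w) (e : E) :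
    fderiv ℝ (fun y => fderiv ℝ w y e) x₀ e ≤ 0 := by
  set L : ℝ → E := fun t => x₀ + t • e
  have hL : ∀ t, HasDerivAt L e t := fun t =>
    (((hasDerivAt_id t).smul_const e).const_add x₀).congr_deriv (one_smul ℝ e)
  have hL0 : L 0 = x₀ := by simp [L]
  have hwd : Differentiable ℝ w := hw.differentiable (by norm_num)
  have hderiv : deriv (w ∘ L) = fun t => fderiv ℝ w (L t) e := funext fun t =>
    ((hwd (L t)).hasFDerivAt.comp_hasDerivAt t (hL t)).deriv
  have hderiv2 : deriv (deriv (w ∘ L)) 0 = fderiv ℝ (fun y => fderiv ℝ w y e) x₀ e := by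
    have := ((hw.differentiable_fderiv_apply e (L 0)).hasFDerivAt.comp_hasDerivAt 0 (hL 0))
    rw [hderiv, ← hL0]
    exact this.deriv
  have hLc : Continuous L := by fun_prop
  rw [← hderiv2]
  refine IsLocalMax.deriv_deriv_nonpos ?_ (hwd.continuous.comp hLc).continuousAt
  exact (hL0 ▸ h).comp_continuous hLc.continuousAt

end Directional

section Laplacian

variable {n : ℕ} {u v w : EuclideanSpace ℝ (Fin n) → ℝ}

theorem lap_const_mul_sub (hu : ContDiff ℝ 2 u) (hv : ContDiff ℝ 2 v) (c : ℝ)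
    (x : EuclideanSpace ℝ (Fin n)) :
    lap (fun y => c * u y - v y) x = c * lap u x - lap v x := by
  have hud : Differentiable ℝ u := hu.differentiable (by norm_num)
  have hvd : Differentiable ℝ v := hv.differentiable (by norm_num)
  have hfderiv : ∀ e, (fun y => fderiv ℝ (fun y => c * u y - v y) y e) =
      fun y => c * fderiv ℝ u y e - fderiv ℝ v y e := fun e => funext fun y => by
    rw [fderiv_fun_sub ((hud y).const_mul c) (hvd y), fderiv_const_mul (hud y)]
    simp
  simp only [lap, hfderiv, Finset.mul_sum, ← Finset.sum_sub_distrib]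
  refine Finset.sum_congr rfl fun _ _ => ?_
  rw [fderiv_fun_sub (((hu.differentiable_fderiv_apply _) x).const_mul c)
    (hv.differentiable_fderiv_apply _ x), fderiv_const_mul (hu.differentiable_fderiv_apply _ x)]
  simp

theorem IsLocalMax.lap_nonpos {x₀ : EuclideanSpace ℝ (Fin n)} (h : IsLocalMax w x₀)
    (hw : ContDiff ℝ 2 w) : lap w x₀ ≤ 0 :=
  Finset.sum_nonpos fun _ _ => h.fderiv_fderiv_apply_nonpos hw _

end Laplacian

theorem norm_gradient_eq_norm_fderiv {F : Type*} [NormedAddCommGroup F] [InnerProductSpace ℝ F]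
    [CompleteSpace F] (φ : F → ℝ) (x : F) : ‖gradient φ x‖ = ‖fderiv ℝ φ x‖ := by
  rw [← toDual_gradient, LinearIsometryEquiv.norm_map]

theorem le_add_norm_sub_of_norm_gradient_le_one {F : Type*} [NormedAddCommGroup F]
    [InnerProductSpace ℝ F] [CompleteSpace F] {φ : F → ℝ} (hφ : Differentiable ℝ φ)
    (hgrad : ∀ x, ‖gradient φ x‖ ≤ 1) (x y : F) : φ y ≤ φ x + ‖y - x‖ := by
  have hlip : LipschitzWith 1 φ := lipschitzWith_of_nnnorm_fderiv_le hφ fun z => by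
    rw [← NNReal.coe_le_coe, coe_nnnorm, ← norm_gradient_eq_norm_fderiv]
    exact hgrad z
  have := hlip.dist_le_mul y x
  rw [Real.dist_eq, dist_eq_norm, NNReal.coe_one, one_mul] at this
  linarith [le_abs_self (φ y - φ x)]

theorem eventually_lt_of_lt_liminf_of_nonneg {α : Type*} {l : Filter α} {g : α → ℝ} {a : ℝ}
    (ha : 0 ≤ a) (h : a < liminf g l) : ∀ᶠ x in l, a < g x := by
  refine eventually_lt_of_lt_liminf h ?_
  by_contra hunbdd
  -- otherwise the set in the definition of `liminf` is empty, and `sSup ∅ = 0`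
  have hempty : {b | ∀ᶠ x in l, b ≤ g x} = ∅ :=
    Set.eq_empty_iff_forall_notMem.2 fun b hb => hunbdd ⟨b, hb⟩
  rw [liminf_eq, hempty, Real.sSup_empty] at h
  exact ha.not_gt h

theorem exists_forall_ge_of_le_sub_mul_norm {E : Type*} [NormedAddCommGroup E] [ProperSpace E]
    {w : E → ℝ} (hw : Continuous w) {a b : ℝ} (hb : 0 < b)
    (hgrowth : ∀ᶠ x in cocompact E, w x ≤ a - b * ‖x‖) : ∃ x₀, ∀ y, w y ≤ w x₀ := by
  have hbound : Tendsto (fun x : E => a - b * ‖x‖) (cocompact E) atBot :=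
    tendsto_atBot_add_const_left _ a <| tendsto_neg_atTop_atBot.comp <|
      tendsto_norm_cocompact_atTop.const_mul_atTop hb
  exact hw.exists_forall_ge (tendsto_atBot_mono' _ hgrowth hbound)

section Comparison

variable {n : ℕ} {u v f : EuclideanSpace ℝ (Fin n) → ℝ} {ε lam mu : ℝ}

theorem mul_le_of_isLocalMax_const_mul_sub (hε₀ : 0 ≤ ε) (hε₁ : ε < 1) (hu : ContDiff ℝ 2 u)
    (hv : ContDiff ℝ 2 v) {x₀ : EuclideanSpace ℝ (Fin n)}
    (hmax : IsLocalMax (fun y => ε * u y - v y) x₀) (hf : 0 ≤ f x₀)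
    (hsub : lam - lap u x₀ - f x₀ ≤ 0 ∧ ‖gradient u x₀‖ ≤ 1)
    (hsup : 0 ≤ max (mu - lap v x₀ - f x₀) (‖gradient v x₀‖ - 1)) :
    ε * lam ≤ mu := by
  have hud : DifferentiableAt ℝ u x₀ := hu.differentiable (by norm_num) x₀
  have hvd : DifferentiableAt ℝ v x₀ := hv.differentiable (by norm_num) x₀
  have hfderiv : fderiv ℝ v x₀ = ε • fderiv ℝ u x₀ := by
    have h := hmax.fderiv_eq_zero
    rw [fderiv_fun_sub (hud.const_mul ε) hvd, fderiv_const_mul hud, sub_eq_zero] at h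
    exact h.symm
  -- at the maximum `Dv = ε Du` is strictly inside the unit ball, so the PDE part is active
  have hgrad : ‖gradient v x₀‖ < 1 := by
    rw [norm_gradient_eq_norm_fderiv, hfderiv, norm_smul, Real.norm_eq_abs, abs_of_nonneg hε₀,
      ← norm_gradient_eq_norm_fderiv]
    nlinarith [hsub.2]
  have hpde : 0 ≤ mu - lap v x₀ - f x₀ := by
    rcases le_max_iff.1 hsup with h | h
    · exact h
    · linarith
  have hlap : ε * lap u x₀ - lap v x₀ ≤ 0 := by
    rw [← lap_const_mul_sub hu hv]
    exact hmax.lap_nonpos ((contDiff_const.mul hu).sub hv)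
  nlinarith [mul_nonpos_of_nonneg_of_nonpos hε₀ hsub.1, mul_nonneg (sub_nonneg.2 hε₁.le) hf]

theorem exists_forall_ge_const_mul_sub (hε₀ : 0 ≤ ε) (hε₁ : ε < 1) (hu : Differentiable ℝ u)
    (hv : Continuous v) (hgrad : ∀ x, ‖gradient u x‖ ≤ 1)
    (hvgrow : 1 ≤ liminf (fun x => v x / ‖x‖) (cocompact (EuclideanSpace ℝ (Fin n)))) :
    ∃ x₀, ∀ y, ε * u y - v y ≤ ε * u x₀ - v x₀ := by
  obtain ⟨c, hεc, hc₁⟩ := exists_between hε₁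
  have hv_lower : ∀ᶠ x in cocompact _, c < v x / ‖x‖ :=
    eventually_lt_of_lt_liminf_of_nonneg (hε₀.trans hεc.le) (hc₁.trans_le hvgrow)
  have hnorm : ∀ᶠ x : EuclideanSpace ℝ (Fin n) in cocompact _, 0 < ‖x‖ :=
    tendsto_norm_cocompact_atTop.eventually_gt_atTop 0
  refine exists_forall_ge_of_le_sub_mul_norm
    ((continuous_const.mul hu.continuous).sub hv) (a := ε * u 0) (b := c - ε)
    (sub_pos.2 hεc) ?_
  filter_upwards [hv_lower, hnorm] with x hvx hx
  have hux : u x ≤ u 0 + ‖x‖ := by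
    simpa using le_add_norm_sub_of_norm_gradient_le_one hu hgrad 0 x
  have hvx' : c * ‖x‖ < v x := (lt_div_iff₀ hx).1 hvx
  nlinarith

end Comparison

theorem le_of_forall_lt_one_mul_le_real {a b : ℝ} (h : ∀ ε, 0 ≤ ε → ε < 1 → ε * a ≤ b) :
    a ≤ b := by
  have hlim : Tendsto (fun ε : ℝ => ε * a) (𝓝[<] 1) (𝓝 a) := by
    simpa using ((continuous_mul_const a).tendsto 1).mono_left nhdsWithin_le_nhds
  refine le_of_tendsto hlim ?_
  filter_upwards [Ioo_mem_nhdsLT (show (0 : ℝ) < 1 by norm_num)] with ε hε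
  exact h ε hε.1.le hε.2

theorem stmt0_general {n : ℕ} (u v f : EuclideanSpace ℝ (Fin n) → ℝ) (lam mu : ℝ)
    (hu : ContDiff ℝ 2 u) (hv : ContDiff ℝ 2 v)
    (hf : ∀ x, 0 ≤ f x)
    (hsub : ∀ x, lam - lap u x - f x ≤ 0 ∧ ‖gradient u x‖ ≤ 1)
    (hsup : ∀ x, 0 ≤ max (mu - lap v x - f x) (‖gradient v x‖ - 1))
    (hvgrow : 1 ≤ liminf (fun x => v x / ‖x‖) (cocompact (EuclideanSpace ℝ (Fin n)))) :
    lam ≤ mu := by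
  refine le_of_forall_lt_one_mul_le_real fun ε hε₀ hε₁ => ?_
  obtain ⟨x₀, hx₀⟩ := exists_forall_ge_const_mul_sub hε₀ hε₁
    (hu.differentiable (by norm_num)) hv.continuous (fun x => (hsub x).2) hvgrow
  exact mul_le_of_isLocalMax_const_mul_sub hε₀ hε₁ hu hv (Eventually.of_forall hx₀) (hf x₀)
    (hsub x₀) (hsup x₀)

theorem stmt0 {n : ℕ} (u v f : EuclideanSpace ℝ (Fin n) → ℝ) (lam mu : ℝ)
    (hu : ContDiff ℝ 2 u) (hv : ContDiff ℝ 2 v)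
    (hf : ∀ x, 0 ≤ f x)
    (hsub : ∀ x, lam - lap u x - f x ≤ 0 ∧ ‖gradient u x‖ ≤ 1)
    (hsup : ∀ x, 0 ≤ max (mu - lap v x - f x) (‖gradient v x‖ - 1))
    (hugrow : limsup (fun x => u x / ‖x‖) (cocompact (EuclideanSpace ℝ (Fin n))) ≤ 1)
    (hvgrow : 1 ≤ liminf (fun x => v x / ‖x‖) (cocompact (EuclideanSpace ℝ (Fin n)))) :
    lam ≤ mu :=
  stmt0_general u v f lam mu hu hv hf hsub hsup hvgrow
end

section
/- Let f : ℝⁿ → ℝ be continuous with f(x) ≥ (|x| − K)⁺ for all x, for some constant K > 0. Then the function u(x) = (|x| − K)⁺ is convex, Lipschitz with constant 1, satisfies lim_{|x|→∞} u(x)/|x| = 1, and for every x₀ and every (p, X) in the second-order superjet of u at x₀ one has max{δ u(x₀) − tr X − f(x₀), |p| − 1} ≤ 0 for every 0 < δ ≤ 1. -/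
open Filter
open scoped InnerProductSpace Topology

/-- `(p, X)` belongs to the second-order superjet of `u` at `x₀`. -/
def InSuperjet {n : ℕ} (u : EuclideanSpace ℝ (Fin n) → ℝ)
    (x₀ p : EuclideanSpace ℝ (Fin n)) (X : Matrix (Fin n) (Fin n) ℝ) : Prop :=
  ∀ c > (0:ℝ), ∀ᶠ x in nhds x₀,
    u x ≤ u x₀ + ⟪p, x - x₀⟫_ℝ +
      (1 / 2) * ∑ i, ∑ j, X i j * (x - x₀) i * (x - x₀) j + c * ‖x - x₀‖ ^ 2

/-!
All second-order information about `u = (‖x‖ - K)⁺` at `x₀` is read off along lines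
`t ↦ x₀ + t • v`, on which the superjet inequality reads
`u (x₀ + t • v) ≤ u x₀ + t ⟪p, v⟫ + O(t²)`. In the direction `v = -p`, the 1-Lipschitz bound
`u (x₀ - t • p) ≥ u x₀ - t ‖p‖` gives `‖p‖² ≤ ‖p‖ + O(t)`, hence `‖p‖ ≤ 1`. Adding the
inequalities at `±t` and using midpoint convexity of `u` gives `0 ≤ t² (vᵀ X v / 2 + c ‖v‖²)`
for every `c > 0`, hence `vᵀ X v ≥ 0` and `tr X ≥ 0`. Finally
`δ u x₀ - tr X - f x₀ ≤ u x₀ - f x₀ ≤ 0`.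
-/

open scoped NNReal

lemma Matrix.sum_sum_mul_smul_mul_smul {n : ℕ} (X : Matrix (Fin n) (Fin n) ℝ) (t : ℝ)
    (v : EuclideanSpace ℝ (Fin n)) :
    ∑ i, ∑ j, X i j * (t • v) i * (t • v) j = t ^ 2 * ∑ i, ∑ j, X i j * v i * v j := by
  simp only [PiLp.smul_apply, smul_eq_mul, Finset.mul_sum]
  exact Finset.sum_congr rfl fun i _ => Finset.sum_congr rfl fun j _ => by ring

lemma Matrix.sum_sum_mul_single_mul_single {n : ℕ} (X : Matrix (Fin n) (Fin n) ℝ) (i : Fin n) :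
    ∑ j, ∑ k, X j k * EuclideanSpace.single i (1 : ℝ) j * EuclideanSpace.single i (1 : ℝ) k
      = X i i := by
  simp [PiLp.single_apply, mul_ite, Finset.sum_ite_eq']

lemma le_zero_of_eventually_le_mul {a C : ℝ} (h : ∀ᶠ t in 𝓝[>] (0 : ℝ), a ≤ t * C) : a ≤ 0 := by
  have hlim : Tendsto (fun t : ℝ => t * C) (𝓝[>] 0) (𝓝 0) := by
    simpa using (tendsto_id.mul_const C).mono_left (nhdsWithin_le_nhds (a := (0 : ℝ)))
  exact ge_of_tendsto hlim h

namespace InSuperjet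

variable {n : ℕ} {u : EuclideanSpace ℝ (Fin n) → ℝ} {x₀ p : EuclideanSpace ℝ (Fin n)}
  {X : Matrix (Fin n) (Fin n) ℝ}

lemma eventually_le_along_line (h : InSuperjet u x₀ p X) (v : EuclideanSpace ℝ (Fin n))
    {c : ℝ} (hc : 0 < c) :
    ∀ᶠ t in 𝓝 (0 : ℝ), u (x₀ + t • v) ≤ u x₀ + t * ⟪p, v⟫_ℝ +
      t ^ 2 * ((1 / 2) * ∑ i, ∑ j, X i j * v i * v j + c * ‖v‖ ^ 2) := by
  have hline : Tendsto (fun t : ℝ => x₀ + t • v) (𝓝 0) (𝓝 x₀) := by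
    simpa using ((continuous_id.smul continuous_const).const_add x₀).tendsto (0 : ℝ)
  filter_upwards [hline.eventually (h c hc)] with t ht
  rw [add_sub_cancel_left, Matrix.sum_sum_mul_smul_mul_smul, real_inner_smul_right,
    norm_smul, mul_pow, Real.norm_eq_abs, sq_abs] at ht
  linarith

lemma norm_le_of_lipschitzWith (h : InSuperjet u x₀ p X) {L : ℝ≥0} (hu : LipschitzWith L u) :
    ‖p‖ ≤ L := by
  set C := (1 / 2) * ∑ i, ∑ j, X i j * (-p) i * (-p) j + 1 * ‖-p‖ ^ 2
  have hsq : ‖p‖ ^ 2 - L * ‖p‖ ≤ 0 := by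
    refine le_zero_of_eventually_le_mul (C := C) ?_
    filter_upwards [nhdsWithin_le_nhds (h.eventually_le_along_line (-p) one_pos),
      self_mem_nhdsWithin] with t hle (ht : 0 < t)
    have hlip : u x₀ - u (x₀ + t • -p) ≤ L * (t * ‖p‖) := by
      have := hu.dist_le_mul x₀ (x₀ + t • -p)
      rw [Real.dist_eq, dist_self_add_right, norm_smul, norm_neg, Real.norm_eq_abs,
        abs_of_pos ht] at this
      exact (le_abs_self _).trans this
    rw [inner_neg_right, real_inner_self_eq_norm_sq] at hle
    change _ ≤ _ + _ + t ^ 2 * C at hle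
    refine le_of_mul_le_mul_left ?_ ht
    linarith
  by_contra! hp
  nlinarith [L.coe_nonneg]

lemma sum_sum_mul_nonneg_of_convexOn (h : InSuperjet u x₀ p X) (hu : ConvexOn ℝ Set.univ u)
    (v : EuclideanSpace ℝ (Fin n)) : 0 ≤ ∑ i, ∑ j, X i j * v i * v j := by
  set Q := ∑ i, ∑ j, X i j * v i * v j
  have hmid : ∀ t : ℝ, u x₀ ≤ (1 / 2) * u (x₀ + t • v) + (1 / 2) * u (x₀ + (-t) • v) := by
    intro t
    have := hu.2 (Set.mem_univ (x₀ + t • v)) (Set.mem_univ (x₀ + (-t) • v))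
      (by norm_num : (0 : ℝ) ≤ 1 / 2) (by norm_num : (0 : ℝ) ≤ 1 / 2) (by norm_num)
    rwa [show (1 / 2 : ℝ) • (x₀ + t • v) + (1 / 2 : ℝ) • (x₀ + (-t) • v) = x₀ by module] at this
  have hc : ∀ c > (0 : ℝ), 0 ≤ (1 / 2) * Q + c * ‖v‖ ^ 2 := by
    intro c hc
    have hline := h.eventually_le_along_line v hc
    have hnonneg : ∀ᶠ t in 𝓝[≠] (0 : ℝ), 0 ≤ (1 / 2) * Q + c * ‖v‖ ^ 2 := by
      filter_upwards [hline.filter_mono nhdsWithin_le_nhds,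
        ((continuous_neg.tendsto' 0 0 neg_zero).eventually hline).filter_mono nhdsWithin_le_nhds,
        self_mem_nhdsWithin] with t hplus hminus (ht : t ≠ 0)
      rw [neg_sq] at hminus
      have ht2 : 0 < t ^ 2 := by positivity
      refine (mul_nonneg_iff_of_pos_left ht2).1 ?_
      linarith [hmid t]
    exact hnonneg.exists.choose_spec
  have hlim : Tendsto (fun c : ℝ => (1 / 2) * Q + c * ‖v‖ ^ 2) (𝓝[>] 0) (𝓝 ((1 / 2) * Q)) := by
    simpa using ((tendsto_id.mul_const (‖v‖ ^ 2)).const_add ((1 / 2) * Q)).mono_left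
      (nhdsWithin_le_nhds (a := (0 : ℝ)))
  have := ge_of_tendsto hlim (eventually_nhdsWithin_of_forall fun c hc' => hc c hc')
  linarith

lemma trace_nonneg_of_convexOn (h : InSuperjet u x₀ p X) (hu : ConvexOn ℝ Set.univ u) :
    0 ≤ X.trace :=
  Finset.sum_nonneg fun i _ => by
    simpa [Matrix.sum_sum_mul_single_mul_single] using
      h.sum_sum_mul_nonneg_of_convexOn hu (EuclideanSpace.single i 1)

end InSuperjet

section PosPartNormSub

variable {E : Type*} [SeminormedAddCommGroup E] (K : ℝ)

lemma convexOn_max_norm_sub_zero [NormedSpace ℝ E] : ConvexOn ℝ Set.univ (fun x : E => max (‖x‖ - K) 0) :=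
  ((convexOn_norm convex_univ).add_const (-K)).sup (convexOn_const 0 convex_univ)

lemma lipschitzWith_max_norm_sub_zero : LipschitzWith 1 (fun x : E => max (‖x‖ - K) 0) :=
  LipschitzWith.of_dist_le_mul fun x y => by
    rw [NNReal.coe_one, one_mul, Real.dist_eq, dist_eq_norm]
    calc |max (‖x‖ - K) 0 - max (‖y‖ - K) 0| ≤ |(‖x‖ - K) - (‖y‖ - K)| :=
          abs_max_sub_max_le_abs _ _ _
      _ = |‖x‖ - ‖y‖| := by rw [sub_sub_sub_cancel_right]
      _ ≤ ‖x - y‖ := abs_norm_sub_norm_le x y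

lemma tendsto_max_norm_sub_zero_div_norm [ProperSpace E] :
    Tendsto (fun x : E => max (‖x‖ - K) 0 / ‖x‖) (cocompact E) (𝓝 1) := by
  have hnorm := tendsto_norm_cocompact_atTop (E := E)
  have hlim : Tendsto (fun x : E => 1 - K / ‖x‖) (cocompact E) (𝓝 1) := by
    simpa using tendsto_const_nhds.sub ((tendsto_const_nhds (x := K)).div_atTop hnorm)
  refine hlim.congr' ?_
  filter_upwards [hnorm.eventually (eventually_gt_atTop (max K 0))] with x hx
  rw [max_lt_iff] at hx
  rw [max_eq_left (by linarith), sub_div, div_self hx.2.ne']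

end PosPartNormSub

theorem stmt3_general {n : ℕ} (f : EuclideanSpace ℝ (Fin n) → ℝ)
    (K : ℝ)
    (hfK : ∀ x : EuclideanSpace ℝ (Fin n), max (‖x‖ - K) 0 ≤ f x) :
    ConvexOn ℝ Set.univ (fun x : EuclideanSpace ℝ (Fin n) => max (‖x‖ - K) 0) ∧
    LipschitzWith 1 (fun x : EuclideanSpace ℝ (Fin n) => max (‖x‖ - K) 0) ∧
    Tendsto (fun x : EuclideanSpace ℝ (Fin n) => max (‖x‖ - K) 0 / ‖x‖)
      (cocompact (EuclideanSpace ℝ (Fin n))) (nhds 1) ∧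
    ∀ δ : ℝ, 0 < δ → δ ≤ 1 →
      ∀ (x₀ p : EuclideanSpace ℝ (Fin n)) (X : Matrix (Fin n) (Fin n) ℝ),
        InSuperjet (fun x : EuclideanSpace ℝ (Fin n) => max (‖x‖ - K) 0) x₀ p X →
        max (δ * max (‖x₀‖ - K) 0 - X.trace - f x₀) (‖p‖ - 1) ≤ 0 := by
  have hconv := convexOn_max_norm_sub_zero (E := EuclideanSpace ℝ (Fin n)) K
  have hlip := lipschitzWith_max_norm_sub_zero (E := EuclideanSpace ℝ (Fin n)) K
  refine ⟨hconv, hlip, tendsto_max_norm_sub_zero_div_norm K, fun δ _ hδ1 x₀ p X hS => ?_⟩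
  have hp : ‖p‖ ≤ 1 := by exact_mod_cast hS.norm_le_of_lipschitzWith hlip
  have htr : 0 ≤ X.trace := hS.trace_nonneg_of_convexOn hconv
  have hδu : δ * max (‖x₀‖ - K) 0 ≤ max (‖x₀‖ - K) 0 :=
    mul_le_of_le_one_left (le_max_right _ _) hδ1
  exact max_le (by linarith [hfK x₀]) (by linarith)

theorem stmt3 {n : ℕ} (f : EuclideanSpace ℝ (Fin n) → ℝ) (hf : Continuous f)
    (K : ℝ) (hK : 0 < K)
    (hfK : ∀ x : EuclideanSpace ℝ (Fin n), max (‖x‖ - K) 0 ≤ f x) :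
    ConvexOn ℝ Set.univ (fun x : EuclideanSpace ℝ (Fin n) => max (‖x‖ - K) 0) ∧
    LipschitzWith 1 (fun x : EuclideanSpace ℝ (Fin n) => max (‖x‖ - K) 0) ∧
    Tendsto (fun x : EuclideanSpace ℝ (Fin n) => max (‖x‖ - K) 0 / ‖x‖)
      (cocompact (EuclideanSpace ℝ (Fin n))) (nhds 1) ∧
    ∀ δ : ℝ, 0 < δ → δ ≤ 1 →
      ∀ (x₀ p : EuclideanSpace ℝ (Fin n)) (X : Matrix (Fin n) (Fin n) ℝ),
        InSuperjet (fun x : EuclideanSpace ℝ (Fin n) => max (‖x‖ - K) 0) x₀ p X →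
        max (δ * max (‖x₀‖ - K) 0 - X.trace - f x₀) (‖p‖ - 1) ≤ 0 :=
  stmt3_general f K hfK
end

section
/- Let u : ℝⁿ → ℝ be Lipschitz with constant 1 and satisfy lim_{|x|→∞} u(x)/|x| = 1. Fix 0 < ε < 1. Then the function C(x,y) = ε u((x+y)/2) − (u(x)+u(y))/2 tends to −∞ as |x| + |y| → ∞, and hence attains its global maximum on ℝⁿ × ℝⁿ if u is continuous. -/
/-!
Since `u x / ‖x‖ → 1`, for `c := (1 + ε) / 2 < 1` there is a constant `C` with
`u x ≥ c ‖x‖ - C` everywhere (far out by the growth condition, on a ball by the Lipschitz bound).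
The Lipschitz bound also gives `u ((x + y) / 2) ≤ u 0 + (‖x‖ + ‖y‖) / 2`, so
`ε u ((x + y) / 2) - (u x + u y) / 2 ≤ ε u 0 + C - (c - ε) / 2 (‖x‖ + ‖y‖)`, and `c > ε`.
A continuous function tending to `-∞` at infinity attains its maximum.
-/

open Filter Bornology
open scoped Topology

section

variable {E F : Type*} [SeminormedAddCommGroup E] [SeminormedAddCommGroup F]

lemma LipschitzWith.apply_le_apply_zero_add_mul_norm {u : E → ℝ} {K : NNReal}
    (hlip : LipschitzWith K u) (x : E) : u x ≤ u 0 + K * ‖x‖ := by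
  have := (abs_le.mp (hlip.dist_le_mul x 0)).2
  rw [dist_zero_right] at this
  linarith

lemma LipschitzWith.apply_zero_sub_mul_norm_le {u : E → ℝ} {K : NNReal}
    (hlip : LipschitzWith K u) (x : E) : u 0 - K * ‖x‖ ≤ u x := by
  have := (abs_le.mp (hlip.dist_le_mul x 0)).1
  rw [dist_zero_right] at this
  linarith

lemma LipschitzWith.exists_mul_norm_sub_le_of_tendsto_div_norm {u : E → ℝ} {K : NNReal}
    {a c : ℝ} (hlip : LipschitzWith K u)
    (hgrow : Tendsto (fun x => u x / ‖x‖) (cobounded E) (𝓝 a)) (hc : c < a) :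
    ∃ C, ∀ x, c * ‖x‖ - C ≤ u x := by
  obtain ⟨R, -, hR⟩ := (hasBasis_cobounded_norm.eventually_iff).mp
    (hgrow.eventually (eventually_gt_nhds hc))
  set R' := max R 1
  refine ⟨(|c| + K) * R' + |u 0|, fun x => ?_⟩
  rcases le_or_gt R' ‖x‖ with hx | hx
  · have hx0 : 0 < ‖x‖ := (zero_lt_one.trans_le (le_max_right R 1)).trans_le hx
    have hcx : c * ‖x‖ < u x := (lt_div_iff₀ hx0).mp (hR ((le_max_left R 1).trans hx))
    have hC : 0 ≤ (|c| + K) * R' := by positivity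
    linarith [abs_nonneg (u 0)]
  · have hcx : c * ‖x‖ ≤ |c| * R' :=
      mul_le_mul (le_abs_self c) hx.le (norm_nonneg x) (abs_nonneg c)
    have hKx : (K : ℝ) * ‖x‖ ≤ K * R' := mul_le_mul_of_nonneg_left hx.le K.2
    linarith [hlip.apply_zero_sub_mul_norm_le x, neg_abs_le (u 0)]

lemma tendsto_norm_add_norm_cobounded_atTop :
    Tendsto (fun q : E × F => ‖q.1‖ + ‖q.2‖) (cobounded (E × F)) atTop :=
  tendsto_atTop_mono (fun _ => max_le (le_add_of_nonneg_right (norm_nonneg _))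
    (le_add_of_nonneg_left (norm_nonneg _))) tendsto_norm_cobounded_atTop

variable [NormedSpace ℝ E]

lemma LipschitzWith.mul_apply_midpoint_sub_average_le {u : E → ℝ} (hlip : LipschitzWith 1 u)
    {ε c C : ℝ} (hε : 0 ≤ ε) (hlow : ∀ x, c * ‖x‖ - C ≤ u x) (x y : E) :
    ε * u ((1 / 2 : ℝ) • (x + y)) - (u x + u y) / 2 ≤
      ε * u 0 + C - (c - ε) / 2 * (‖x‖ + ‖y‖) := by
  have hmid : ‖(1 / 2 : ℝ) • (x + y)‖ ≤ (‖x‖ + ‖y‖) / 2 := by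
    rw [norm_smul, Real.norm_of_nonneg (by norm_num)]
    linarith [norm_add_le x y]
  have hu_mid : u ((1 / 2 : ℝ) • (x + y)) ≤ u 0 + (‖x‖ + ‖y‖) / 2 := by
    have := hlip.apply_le_apply_zero_add_mul_norm ((1 / 2 : ℝ) • (x + y))
    push_cast at this
    linarith
  linarith [mul_le_mul_of_nonneg_left hu_mid hε, hlow x, hlow y]

theorem LipschitzWith.tendsto_mul_apply_midpoint_sub_average_atBot {u : E → ℝ}
    (hlip : LipschitzWith 1 u) (hgrow : Tendsto (fun x => u x / ‖x‖) (cobounded E) (𝓝 1))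
    {ε : ℝ} (hε0 : 0 ≤ ε) (hε1 : ε < 1) :
    Tendsto (fun q : E × E => ε * u ((1 / 2 : ℝ) • (q.1 + q.2)) - (u q.1 + u q.2) / 2)
      (cobounded (E × E)) atBot := by
  obtain ⟨C, hlow⟩ :=
    hlip.exists_mul_norm_sub_le_of_tendsto_div_norm hgrow (c := (1 + ε) / 2) (by linarith)
  refine tendsto_atBot_mono (fun q => hlip.mul_apply_midpoint_sub_average_le hε0 hlow q.1 q.2) ?_
  refine tendsto_atBot_add_const_left _ _ (tendsto_neg_atTop_atBot.comp ?_)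
  exact tendsto_norm_add_norm_cobounded_atTop.const_mul_atTop (by linarith)

end

theorem stmt5_general {n : ℕ} (u : EuclideanSpace ℝ (Fin n) → ℝ)
    (hlip : LipschitzWith 1 u)
    (hgrow : Tendsto (fun x : EuclideanSpace ℝ (Fin n) => u x / ‖x‖)
      (cocompact (EuclideanSpace ℝ (Fin n))) (nhds 1))
    (ε : ℝ) (hε0 : 0 < ε) (hε1 : ε < 1) :
    Tendsto (fun q : EuclideanSpace ℝ (Fin n) × EuclideanSpace ℝ (Fin n) =>
        ε * u ((1 / 2 : ℝ) • (q.1 + q.2)) - (u q.1 + u q.2) / 2)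
      (cocompact (EuclideanSpace ℝ (Fin n) × EuclideanSpace ℝ (Fin n))) atBot ∧
    ∃ p : EuclideanSpace ℝ (Fin n) × EuclideanSpace ℝ (Fin n),
      ∀ q : EuclideanSpace ℝ (Fin n) × EuclideanSpace ℝ (Fin n),
        ε * u ((1 / 2 : ℝ) • (q.1 + q.2)) - (u q.1 + u q.2) / 2 ≤
          ε * u ((1 / 2 : ℝ) • (p.1 + p.2)) - (u p.1 + u p.2) / 2 := by
  rw [← Metric.cobounded_eq_cocompact] at hgrow ⊢
  have htendsto := hlip.tendsto_mul_apply_midpoint_sub_average_atBot hgrow hε0.le hε1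
  have hcont : Continuous fun q : EuclideanSpace ℝ (Fin n) × EuclideanSpace ℝ (Fin n) =>
      ε * u ((1 / 2 : ℝ) • (q.1 + q.2)) - (u q.1 + u q.2) / 2 := by
    have hu := hlip.continuous
    fun_prop
  refine ⟨htendsto, hcont.exists_forall_ge ?_⟩
  rwa [← Metric.cobounded_eq_cocompact]

theorem stmt5 {n : ℕ} (u : EuclideanSpace ℝ (Fin n) → ℝ)
    (hu : Continuous u) (hlip : LipschitzWith 1 u)
    (hgrow : Tendsto (fun x : EuclideanSpace ℝ (Fin n) => u x / ‖x‖)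
      (cocompact (EuclideanSpace ℝ (Fin n))) (nhds 1))
    (ε : ℝ) (hε0 : 0 < ε) (hε1 : ε < 1) :
    Tendsto (fun q : EuclideanSpace ℝ (Fin n) × EuclideanSpace ℝ (Fin n) =>
        ε * u ((1 / 2 : ℝ) • (q.1 + q.2)) - (u q.1 + u q.2) / 2)
      (cocompact (EuclideanSpace ℝ (Fin n) × EuclideanSpace ℝ (Fin n))) atBot ∧
    ∃ p : EuclideanSpace ℝ (Fin n) × EuclideanSpace ℝ (Fin n),
      ∀ q : EuclideanSpace ℝ (Fin n) × EuclideanSpace ℝ (Fin n),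
        ε * u ((1 / 2 : ℝ) • (q.1 + q.2)) - (u q.1 + u q.2) / 2 ≤
          ε * u ((1 / 2 : ℝ) • (p.1 + p.2)) - (u p.1 + u p.2) / 2 :=
  stmt5_general u hlip hgrow ε hε0 hε1
end

section
/- Let Ω ⊂ ℝⁿ be a nonempty bounded set and u : ℝⁿ → ℝ a convex function which is Lipschitz with constant 1 and satisfies u(x) = min_{y ∈ cl(Ω)} { u(y) + |x − y| } for all x ∈ ℝⁿ. Then for all x with |x| > C, where C bounds cl(Ω), and all z with |z| small, the second difference satisfies u(x+z) − 2u(x) + u(x−z) ≤ |z|²/(|x| − C) + o(|z|²) as |z| → 0. -/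
/-!
The minimum defining `u x` is attained at some `y ∈ closure Ω`, so `u` is touched from above at
`x` by the cone `w ↦ u y + ‖w - y‖`. By the parallelogram law the second differences of this cone
at `x` are at most `‖z‖² / ‖x - y‖ ≤ ‖z‖² / (‖x‖ - C)`, for every `z` and not only small ones.
-/

section

variable {E : Type*} [NormedAddCommGroup E] [InnerProductSpace ℝ E]

lemma norm_add_add_norm_sub_le {a : E} (ha : a ≠ 0) (z : E) :
    ‖a + z‖ + ‖a - z‖ ≤ 2 * ‖a‖ + ‖z‖ ^ 2 / ‖a‖ := by
  have hpos : 0 < ‖a‖ := norm_pos_iff.mpr ha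
  have hpar := parallelogram_law_with_norm ℝ a z
  have hdiv : ‖a‖ * (‖z‖ ^ 2 / ‖a‖) = ‖z‖ ^ 2 := mul_div_cancel₀ _ hpos.ne'
  refine le_of_sq_le_sq ?_ (by positivity)
  nlinarith [sq_nonneg (‖a + z‖ - ‖a - z‖), sq_nonneg (‖z‖ ^ 2 / ‖a‖)]

lemma second_diff_le_of_le_cone {u : E → ℝ} {x y : E} (hxy : x ≠ y)
    (hle : ∀ w, u w ≤ u y + ‖w - y‖) (heq : u x = u y + ‖x - y‖) (z : E) :
    u (x + z) - 2 * u x + u (x - z) ≤ ‖z‖ ^ 2 / ‖x - y‖ := by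
  have hplus : u (x + z) ≤ u y + ‖(x - y) + z‖ := by
    simpa only [add_sub_right_comm] using hle (x + z)
  have hminus : u (x - z) ≤ u y + ‖(x - y) - z‖ := by
    simpa only [sub_right_comm] using hle (x - z)
  linarith [norm_add_add_norm_sub_le (sub_ne_zero.mpr hxy) z]

end

theorem stmt8_general {n : ℕ} (Ω : Set (EuclideanSpace ℝ (Fin n)))
    (u : EuclideanSpace ℝ (Fin n) → ℝ)
    (hrep : ∀ x, IsLeast {r : ℝ | ∃ y ∈ closure Ω, r = u y + ‖x - y‖} (u x))
    (C : ℝ) (hC : ∀ y ∈ closure Ω, ‖y‖ ≤ C) :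
    ∀ x : EuclideanSpace ℝ (Fin n), C < ‖x‖ → ∀ ε > (0:ℝ), ∃ r > (0:ℝ),
      ∀ z : EuclideanSpace ℝ (Fin n), ‖z‖ < r →
        u (x + z) - 2 * u x + u (x - z) ≤ ‖z‖ ^ 2 / (‖x‖ - C) + ε * ‖z‖ ^ 2 := by
  intro x hx ε hε
  obtain ⟨⟨y, hy, hxy⟩, -⟩ := hrep x
  have hdist : ‖x‖ - C ≤ ‖x - y‖ := by linarith [norm_sub_norm_le x y, hC y hy]
  have hne : x ≠ y := sub_ne_zero.mp (norm_pos_iff.mp (by linarith))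
  have hcone : ∀ w, u w ≤ u y + ‖w - y‖ := fun w => (hrep w).2 ⟨y, hy, rfl⟩
  refine ⟨1, one_pos, fun z _ => ?_⟩
  calc u (x + z) - 2 * u x + u (x - z) ≤ ‖z‖ ^ 2 / ‖x - y‖ :=
        second_diff_le_of_le_cone hne hcone hxy z
    _ ≤ ‖z‖ ^ 2 / (‖x‖ - C) := by gcongr
    _ ≤ ‖z‖ ^ 2 / (‖x‖ - C) + ε * ‖z‖ ^ 2 := by
        linarith [mul_nonneg hε.le (sq_nonneg ‖z‖)]

theorem stmt8 {n : ℕ} (Ω : Set (EuclideanSpace ℝ (Fin n)))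
    (hΩne : Ω.Nonempty) (hΩb : Bornology.IsBounded Ω)
    (u : EuclideanSpace ℝ (Fin n) → ℝ)
    (hconv : ConvexOn ℝ Set.univ u) (hlip : LipschitzWith 1 u)
    (hrep : ∀ x, IsLeast {r : ℝ | ∃ y ∈ closure Ω, r = u y + ‖x - y‖} (u x))
    (C : ℝ) (hC : ∀ y ∈ closure Ω, ‖y‖ ≤ C) :
    ∀ x : EuclideanSpace ℝ (Fin n), C < ‖x‖ → ∀ ε > (0:ℝ), ∃ r > (0:ℝ),
      ∀ z : EuclideanSpace ℝ (Fin n), ‖z‖ < r →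
        u (x + z) - 2 * u x + u (x - z) ≤ ‖z‖ ^ 2 / (‖x‖ - C) + ε * ‖z‖ ^ 2 :=
  stmt8_general Ω u hrep C hC
end

section
/- Let φ : (0,∞) → ℝ be C¹ with locally Lipschitz derivative, nondecreasing and convex, and suppose there exist r₀ > 0 and δ > 0 with: φ'(r) = 1 for r ≥ r₀; φ satisfies δφ(r) − ((n−1)/r)φ'(r) − φ''(r) − f₀(r) = 0 for 0 < r < r₀ (where φ'' exists); and δφ(r) − ((n−1)/r)φ'(r) − φ''(r) − f₀(r) ≤ 0 for all r > 0 where φ'' exists, with f₀ continuous. If the one-sided second derivative ρ = φ''(r₀−) exists and is nonnegative, then ρ = 0, i.e. φ is twice differentiable at r₀ with φ''(r₀) = 0. -/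
open Filter
open scoped Topology

/-! On `(0, r₀)` the equation expresses `φ''` as the residual
`δφ − ((n−1)/r)φ' − f₀`, which is continuous on `(0, ∞)`. Hence `ρ = φ''(r₀−)` is the value of
the residual at `r₀`, while the inequality on `(r₀, ∞)` makes that value nonpositive. -/

theorem le_zero_of_tendsto_nhdsLT_of_eventuallyEq {F g : ℝ → ℝ} {x ρ : ℝ}
    (hF : ContinuousAt F x) (hgF : g =ᶠ[𝓝[<] x] F) (hg : Tendsto g (𝓝[<] x) (𝓝 ρ))
    (hright : ∀ᶠ y in 𝓝[>] x, F y ≤ 0) : ρ ≤ 0 := by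
  have hρ : ρ = F x :=
    tendsto_nhds_unique hg ((hF.tendsto.mono_left nhdsWithin_le_nhds).congr' hgF.symm)
  exact hρ ▸ le_of_tendsto (hF.tendsto.mono_left nhdsWithin_le_nhds) hright

theorem stmt11_general (n : ℕ) (φ f₀ g : ℝ → ℝ) (δ r₀ ρ : ℝ)
    (hr₀ : 0 < r₀)
    (hφc : ContinuousOn φ (Set.Ioi 0))
    (hφ'c : ContinuousOn (deriv φ) (Set.Ioi 0))
    (hf₀c : ContinuousOn f₀ (Set.Ioi 0))
    (heq : ∀ r ∈ Set.Ioo 0 r₀,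
      δ * φ r - ((n - 1 : ℝ) / r) * deriv φ r - g r - f₀ r = 0)
    (hineq : ∀ r > r₀, δ * φ r - ((n - 1 : ℝ) / r) * deriv φ r - f₀ r ≤ 0)
    (hρ : Tendsto g (nhdsWithin r₀ (Set.Iio r₀)) (nhds ρ))
    (hρ0 : 0 ≤ ρ) :
    ρ = 0 := by
  set F : ℝ → ℝ := fun r => δ * φ r - ((n - 1 : ℝ) / r) * deriv φ r - f₀ r
  have hFc : ContinuousOn F (Set.Ioi 0) :=
    (continuousOn_const.mul hφc).sub
      ((continuousOn_const.div continuousOn_id fun _ hr => ne_of_gt hr).mul hφ'c) |>.sub hf₀c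
  have hgF : g =ᶠ[𝓝[<] r₀] F := by
    filter_upwards [Ioo_mem_nhdsLT hr₀] with r hr
    linarith [heq r hr]
  have hρ_nonpos : ρ ≤ 0 :=
    le_zero_of_tendsto_nhdsLT_of_eventuallyEq (hFc.continuousAt (Ioi_mem_nhds hr₀)) hgF hρ
      (eventually_nhdsWithin_of_forall hineq)
  linarith

theorem stmt11 (n : ℕ) (φ f₀ g : ℝ → ℝ) (δ r₀ ρ : ℝ)
    (hδ : 0 < δ) (hr₀ : 0 < r₀)
    (hφc : ContinuousOn φ (Set.Ioi 0))
    (hφ'c : ContinuousOn (deriv φ) (Set.Ioi 0))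
    (hf₀c : ContinuousOn f₀ (Set.Ioi 0))
    (hφdiff : ∀ r ∈ Set.Ioi (0:ℝ), DifferentiableAt ℝ φ r)
    (hmono : MonotoneOn φ (Set.Ioi 0))
    (hconv : ConvexOn ℝ (Set.Ioi 0) φ)
    (hφ'1 : ∀ r ≥ r₀, deriv φ r = 1)
    (hg : ∀ r ∈ Set.Ioo 0 r₀, HasDerivAt (deriv φ) (g r) r)
    (heq : ∀ r ∈ Set.Ioo 0 r₀,
      δ * φ r - ((n - 1 : ℝ) / r) * deriv φ r - g r - f₀ r = 0)
    (hineq : ∀ r > r₀, δ * φ r - ((n - 1 : ℝ) / r) * deriv φ r - f₀ r ≤ 0)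
    (hρ : Tendsto g (nhdsWithin r₀ (Set.Iio r₀)) (nhds ρ))
    (hρ0 : 0 ≤ ρ) :
    ρ = 0 :=
  stmt11_general n φ f₀ g δ r₀ ρ hr₀ hφc hφ'c hf₀c heq hineq hρ hρ0
end

section
/- Define λ_− = sup over φ ∈ C²(ℝⁿ) with |Dφ| ≤ 1 of inf_{x ∈ ℝⁿ}(Δφ(x) + f(x)), and define λ* by formula (maxform): λ* is the supremum of λ such that max{λ − Δu − f, |Du| − 1} = 0 admits a viscosity subsolution u with limsup u(x)/|x| ≤ 1. Assume λ* admits a convex C^{1,1} solution u* with |Du*| ≤ 1 and 0 ≤ D²u* ≤ L, and f is convex and superlinear. Then λ_− = λ*. -/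
open Filter MeasureTheory
open scoped InnerProductSpace Topology

/-!
`λ₋ ≤ λ*`: an admissible `φ ∈ C²` with `|∇φ| ≤ 1` is itself a viscosity subsolution, since at a
point of its superjet `(p, X)` one has `p = ∇φ` and `Δφ ≤ tr X` (restrict the superjet inequality
to lines and use the first and second order conditions for a local maximum), and it is
`1`-Lipschitz, hence has slope at most `1` at infinity.

`λ* ≤ λ₋`: mollify `u*` with a bump `ρ` of small radius.  The mollification `φ = ρ ⋆ u*` is smooth
and `1`-Lipschitz, and since the difference quotients of the Lipschitz map `Du*` are bounded,
dominated convergence shows that its Laplacian is the average of the a.e. Laplacian of `u*`: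
`Δφ(x) = ∫ ρ(z) Δu*(x - z) dz`.  Hence `Δφ ≥ 0` (as `D²u* ≥ 0`) and `Δφ ≥ λ* - ρ ⋆ f`.  By superlinearity
`f ≥ λ*` outside a compact set `C`, and on `C` uniform continuity gives `ρ ⋆ f ≤ f + ε`.
-/

open Set Metric
open ContinuousLinearMap (lsmul)
open scoped NNReal Convolution

theorem IsCompact.exists_forall_dist_le_of_continuous {α β : Type*} [PseudoMetricSpace α]
    [PseudoMetricSpace β] {C : Set α} {f : α → β} (hC : IsCompact C) (hf : Continuous f)
    {ε : ℝ} (hε : 0 < ε) : ∃ δ > 0, ∀ x ∈ C, ∀ y ∈ ball x δ, dist (f y) (f x) ≤ ε := by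
  obtain ⟨δ, hδ, hδf⟩ := Metric.mem_uniformity_dist.1 <|
    hC.uniformContinuousAt_of_continuousAt f (fun x _ => hf.continuousAt) (dist_mem_uniformity hε)
  exact ⟨δ, hδ, fun x hx y hy => by
    rw [dist_comm]; exact (hδf (mem_ball'.1 hy) hx).le⟩

section NormedSpace

variable {E : Type*} [NormedAddCommGroup E] [ProperSpace E]

theorem Filter.Tendsto.atTop_of_div_norm {f : E → ℝ}
    (hf : Tendsto (fun x => f x / ‖x‖) (cocompact E) atTop) : Tendsto f (cocompact E) atTop := by
  refine (hf.atTop_mul_atTop₀ tendsto_norm_cocompact_atTop).congr' ?_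
  filter_upwards [tendsto_norm_cocompact_atTop.eventually_gt_atTop 0] with x hx
  exact div_mul_cancel₀ _ hx.ne'

theorem limsup_div_norm_le_of_lipschitzWith {ψ : E → ℝ} {K : ℝ≥0} (hψ : LipschitzWith K ψ) :
    limsup (fun x => ψ x / ‖x‖) (cocompact E) ≤ K := by
  by_cases hcob : IsCoboundedUnder (· ≤ ·) (cocompact E) (fun x => ψ x / ‖x‖)
  swap
  · rw [Real.limsup_of_not_isCoboundedUnder hcob]
    exact K.coe_nonneg
  refine le_of_forall_pos_le_add fun ε hε => limsup_le_of_le hcob ?_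
  have hsmall : Tendsto (fun x : E => ψ 0 / ‖x‖) (cocompact E) (𝓝 0) :=
    tendsto_const_nhds.div_atTop tendsto_norm_cocompact_atTop
  filter_upwards [hsmall.eventually (gt_mem_nhds hε),
    tendsto_norm_cocompact_atTop.eventually_gt_atTop 0] with x hx hpos
  have hlip : ψ x ≤ ψ 0 + K * ‖x‖ := by
    have := hψ.dist_le_mul x 0
    rw [Real.dist_eq, dist_zero_right] at this
    linarith [le_abs_self (ψ x - ψ 0)]
  calc ψ x / ‖x‖ ≤ ψ 0 / ‖x‖ + K := by
        rw [div_add' _ _ _ hpos.ne', div_le_div_iff_of_pos_right hpos]; linarith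
    _ ≤ K + ε := by linarith

end NormedSpace

theorem lipschitzWith_of_hasGradientAt_of_norm_le {F : Type*} [NormedAddCommGroup F]
    [InnerProductSpace ℝ F] [CompleteSpace F] {u : F → ℝ} {g : F → F} {C : ℝ≥0}
    (hu : ∀ x, HasGradientAt u (g x) x) (hg : ∀ x, ‖g x‖ ≤ C) : LipschitzWith C u := by
  refine lipschitzWith_of_nnnorm_fderiv_le (fun x => (hu x).differentiableAt) fun x => ?_
  rw [← NNReal.coe_le_coe, coe_nnnorm, (hu x).hasFDerivAt.fderiv, LinearIsometryEquiv.norm_map]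
  exact hg x

theorem IsLocalMax.nonpos_of_hasDerivAt_hasDerivAt {g g' : ℝ → ℝ} {a D : ℝ}
    (hmax : IsLocalMax g a) (hg : ∀ t, HasDerivAt g (g' t) t) (hg' : HasDerivAt g' D a) :
    D ≤ 0 := by
  by_contra! hD
  -- `g' a = 0` and `g'' a > 0`, so `g' > 0` and `g` increases just to the right of `a`.
  have hga : g' a = 0 := hmax.hasDerivAt_eq_zero (hg a)
  have hpos : ∀ᶠ t in 𝓝[>] a, 0 < g' t := by
    have hslope := (hasDerivAt_iff_tendsto_slope.1 hg').mono_left (nhdsGT_le_nhdsNE a)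
    filter_upwards [hslope.eventually (eventually_gt_nhds hD), self_mem_nhdsWithin]
      with t ht (hat : a < t)
    rwa [slope_def_field, hga, sub_zero, div_pos_iff_of_pos_right (sub_pos.2 hat)] at ht
  obtain ⟨b, hab, hb⟩ := (mem_nhdsGT_iff_exists_Ioo_subset).1 hpos
  have hmono : StrictMonoOn g (Icc a b) :=
    strictMonoOn_of_hasDerivWithinAt_pos (convex_Icc a b)
      (fun t _ => (hg t).continuousAt.continuousWithinAt)
      (fun t _ => (hg t).hasDerivWithinAt) (fun t ht => hb (by rwa [interior_Icc] at ht))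
  obtain ⟨t, hgt, hat, htb⟩ :=
    ((hmax.filter_mono nhdsWithin_le_nhds).and (Ioo_mem_nhdsGT hab)).exists
  exact (hmono (left_mem_Icc.2 hab.le) ⟨hat.le, htb.le⟩ hat).not_ge hgt

section Line

variable {F G : Type*} [NormedAddCommGroup F] [NormedSpace ℝ F]
  [NormedAddCommGroup G] [NormedSpace ℝ G]

theorem HasFDerivAt.hasDerivAt_comp_add_smul {φ : F → G} {φ' : F →L[ℝ] G} {x v : F} {t : ℝ}
    (h : HasFDerivAt φ φ' (x + t • v)) : HasDerivAt (fun s : ℝ => φ (x + s • v)) (φ' v) t := by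
  simpa [Function.comp_def] using
    h.comp_hasDerivAt t (((hasDerivAt_id t).smul_const v).const_add x)

variable {φ : F → ℝ} {x₀ v : F} {a C : ℝ}

theorem isLocalMax_sub_of_eventually_le
    (h : ∀ᶠ t in 𝓝 (0 : ℝ), φ (x₀ + t • v) ≤ φ x₀ + t * a + t ^ 2 * C) :
    IsLocalMax (fun t : ℝ => φ (x₀ + t • v) - (t * a + t ^ 2 * C)) 0 := by
  filter_upwards [h] with t ht
  simp only [zero_smul, add_zero, zero_mul, ne_eq, OfNat.ofNat_ne_zero, not_false_eq_true,
    zero_pow, sub_zero]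
  linarith

theorem hasDerivAt_mul_add_sq_mul (t : ℝ) :
    HasDerivAt (fun t : ℝ => t * a + t ^ 2 * C) (a + 2 * t * C) t := by
  simpa using ((hasDerivAt_id t).mul_const a).fun_add ((hasDerivAt_pow 2 t).mul_const C)

theorem fderiv_apply_eq_of_eventually_le (hφ : DifferentiableAt ℝ φ x₀)
    (h : ∀ᶠ t in 𝓝 (0 : ℝ), φ (x₀ + t • v) ≤ φ x₀ + t * a + t ^ 2 * C) :
    fderiv ℝ φ x₀ v = a := by
  have hd := ((by simpa using hφ.hasFDerivAt :
    HasFDerivAt φ (fderiv ℝ φ x₀) (x₀ + (0 : ℝ) • v)).hasDerivAt_comp_add_smul).sub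
    (hasDerivAt_mul_add_sq_mul (a := a) (C := C) 0)
  have := (isLocalMax_sub_of_eventually_le h).hasDerivAt_eq_zero hd
  linarith

theorem fderiv_fderiv_apply_le_of_eventually_le (hφ : ContDiff ℝ 2 φ)
    (h : ∀ᶠ t in 𝓝 (0 : ℝ), φ (x₀ + t • v) ≤ φ x₀ + t * a + t ^ 2 * C) :
    fderiv ℝ (fun y => fderiv ℝ φ y v) x₀ v ≤ 2 * C := by
  have hdiff : Differentiable ℝ (fun y => fderiv ℝ φ y v) :=
    ((hφ.fderiv_right (m := 1) le_rfl).clm_apply contDiff_const).differentiable one_ne_zero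
  have hg : ∀ t : ℝ, HasDerivAt (fun t : ℝ => φ (x₀ + t • v) - (t * a + t ^ 2 * C))
      (fderiv ℝ φ (x₀ + t • v) v - (a + 2 * t * C)) t := fun t =>
    ((hφ.differentiable two_ne_zero _).hasFDerivAt.hasDerivAt_comp_add_smul).sub
      (hasDerivAt_mul_add_sq_mul t)
  have hg' : HasDerivAt (fun t : ℝ => fderiv ℝ φ (x₀ + t • v) v - (a + 2 * t * C))
      (fderiv ℝ (fun y => fderiv ℝ φ y v) x₀ v - 2 * C) 0 := by
    have h2 : HasDerivAt (fun t : ℝ => a + 2 * t * C) (2 * C) 0 := by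
      simpa using ((hasDerivAt_id (0 : ℝ)).const_mul 2).mul_const C |>.const_add a
    exact ((by simpa using (hdiff x₀).hasFDerivAt : HasFDerivAt (fun y => fderiv ℝ φ y v)
      (fderiv ℝ (fun y => fderiv ℝ φ y v) x₀) (x₀ + (0 : ℝ) • v)).hasDerivAt_comp_add_smul).sub h2
  linarith [(isLocalMax_sub_of_eventually_le h).nonpos_of_hasDerivAt_hasDerivAt hg hg']

end Line

section Superjet

variable {n : ℕ} {φ : EuclideanSpace ℝ (Fin n) → ℝ} {x₀ p : EuclideanSpace ℝ (Fin n)}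
  {X : Matrix (Fin n) (Fin n) ℝ}

theorem InSuperjet.eventually_le_line (h : InSuperjet φ x₀ p X) {c : ℝ} (hc : 0 < c)
    (v : EuclideanSpace ℝ (Fin n)) :
    ∀ᶠ t in 𝓝 (0 : ℝ), φ (x₀ + t • v) ≤ φ x₀ + t * ⟪p, v⟫_ℝ +
      t ^ 2 * ((1 / 2) * ∑ i, ∑ j, X i j * v i * v j + c * ‖v‖ ^ 2) := by
  have hline : Tendsto (fun t : ℝ => x₀ + t • v) (𝓝 0) (𝓝 x₀) :=
    (by fun_prop : Continuous fun t : ℝ => x₀ + t • v).tendsto' 0 x₀ (by simp)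
  filter_upwards [hline.eventually (h c hc)] with t ht
  have hquad : ∑ i, ∑ j, X i j * (t • v) i * (t • v) j = t ^ 2 * ∑ i, ∑ j, X i j * v i * v j := by
    simp only [PiLp.smul_apply, smul_eq_mul, Finset.mul_sum]
    exact Finset.sum_congr rfl fun i _ => Finset.sum_congr rfl fun j _ => by ring
  rw [add_sub_cancel_left, real_inner_smul_right, hquad, norm_smul, mul_pow,
    Real.norm_eq_abs, sq_abs] at ht
  linarith

theorem InSuperjet.eq_gradient (h : InSuperjet φ x₀ p X) (hφ : DifferentiableAt ℝ φ x₀) :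
    p = gradient φ x₀ := by
  have hdual : InnerProductSpace.toDual ℝ _ p = fderiv ℝ φ x₀ := by
    ext v
    rw [InnerProductSpace.toDual_apply_apply,
      fderiv_apply_eq_of_eventually_le hφ (h.eventually_le_line one_pos v)]
  rw [gradient, ← hdual, LinearIsometryEquiv.symm_apply_apply]

theorem InSuperjet.lap_le_trace (h : InSuperjet φ x₀ p X) (hφ : ContDiff ℝ 2 φ) :
    lap φ x₀ ≤ X.trace := by
  refine Finset.sum_le_sum fun i _ => le_of_forall_pos_le_add fun ε hε => ?_
  have hquad : ∑ j, ∑ k, X j k * (EuclideanSpace.single i (1 : ℝ)) j *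
      (EuclideanSpace.single i (1 : ℝ)) k = X i i := by
    simp [mul_ite]
  have := fderiv_fderiv_apply_le_of_eventually_le hφ
    (h.eventually_le_line (half_pos hε) (EuclideanSpace.single i 1))
  rw [hquad, PiLp.norm_single, norm_one] at this
  simp only [Matrix.diag_apply]
  linarith

end Superjet

section Mollification

variable {F : Type*} [NormedAddCommGroup F] [InnerProductSpace ℝ F] [FiniteDimensional ℝ F]
  [MeasurableSpace F] [BorelSpace F] {μ : Measure F} {ρ : F → ℝ}

theorem integrable_mul_inner_fderiv_comp_sub {Du : F → F} {K : ℝ≥0} (hρ : Integrable ρ μ)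
    (hDu : LipschitzWith K Du) (x v : F) :
    Integrable (fun z => ρ z * ⟪fderiv ℝ Du (x - z) v, v⟫_ℝ) μ := by
  refine hρ.mul_bdd (c := K * ‖v‖ * ‖v‖) ?_ (ae_of_all _ fun z => ?_)
  · exact ((by fun_prop : Continuous fun A : F →L[ℝ] F => ⟪A v, v⟫_ℝ).measurable.comp
      ((measurable_fderiv ℝ Du).comp (measurable_const_sub x))).aestronglyMeasurable
  · rw [Real.norm_eq_abs]
    refine (abs_real_inner_le_norm _ _).trans (mul_le_mul_of_nonneg_right ?_ (norm_nonneg v))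
    exact (ContinuousLinearMap.le_opNorm _ v).trans
      (mul_le_mul_of_nonneg_right (norm_fderiv_le_of_lipschitz ℝ hDu) (norm_nonneg v))

variable [μ.IsAddHaarMeasure]

theorem LipschitzWith.convolution {w : F → ℝ} {K : ℝ≥0} (hw : LipschitzWith K w)
    (hρ : Continuous ρ) (hρc : HasCompactSupport ρ) (hρ0 : ∀ z, 0 ≤ ρ z)
    (hρ1 : ∫ z, ρ z ∂μ = 1) : LipschitzWith K (ρ ⋆[lsmul ℝ ℝ, μ] w) := by
  have hint : ∀ c, Integrable (fun z => ρ z * w (c - z)) μ :=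
    hρc.convolutionExists_left (lsmul ℝ ℝ) hρ hw.continuous.locallyIntegrable
  refine LipschitzWith.of_dist_le_mul fun x y => ?_
  rw [dist_eq_norm]
  simp only [convolution_lsmul, smul_eq_mul]
  rw [← integral_sub (hint x) (hint y)]
  calc ‖∫ z, (ρ z * w (x - z) - ρ z * w (y - z)) ∂μ‖ ≤ ∫ z, ρ z * (K * dist x y) ∂μ := by
        refine norm_integral_le_of_norm_le ((hρ.integrable_of_hasCompactSupport hρc).mul_const _)
          (ae_of_all _ fun z => ?_)
        rw [← mul_sub, norm_mul, Real.norm_of_nonneg (hρ0 z)]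
        refine mul_le_mul_of_nonneg_left ?_ (hρ0 z)
        simpa [← dist_eq_norm] using hw.dist_le_mul (x - z) (y - z)
    _ = K * dist x y := by rw [integral_mul_const, hρ1, one_mul]

theorem fderiv_convolution_apply_of_lipschitzWith {w : F → ℝ} {K : ℝ≥0} {x : F}
    (hρ : Continuous ρ) (hρc : HasCompactSupport ρ) (hw : LipschitzWith K w)
    (hdiff : ∀ᵐ z ∂μ, DifferentiableAt ℝ w (x - z))
    (hconv : DifferentiableAt ℝ (ρ ⋆[lsmul ℝ ℝ, μ] w) x) (v : F) :
    fderiv ℝ (ρ ⋆[lsmul ℝ ℝ, μ] w) x v = ∫ z, ρ z * fderiv ℝ w (x - z) v ∂μ := by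
  have hint : ∀ c, Integrable (fun z => ρ z * w (c - z)) μ :=
    hρc.convolutionExists_left (lsmul ℝ ℝ) hρ hw.continuous.locallyIntegrable
  have hslope : ∀ t : ℝ, t⁻¹ • ((ρ ⋆[lsmul ℝ ℝ, μ] w) (x + t • v) - (ρ ⋆[lsmul ℝ ℝ, μ] w) x)
      = ∫ z, ρ z * (t⁻¹ • (w (x - z + t • v) - w (x - z))) ∂μ := by
    intro t
    simp only [convolution_lsmul, smul_eq_mul]
    rw [← integral_sub (hint _) (hint _), ← integral_const_mul]
    congr 1 with z
    simp only [add_sub_right_comm]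
    ring
  have hwc := hw.continuous
  refine tendsto_nhds_unique ((hconv.hasFDerivAt.hasLineDerivAt v).tendsto_slope_zero) ?_
  simp_rw [hslope]
  refine tendsto_integral_filter_of_dominated_convergence (fun z => |ρ z| * (K * ‖v‖))
    (Eventually.of_forall fun t => (by fun_prop : Continuous _).aestronglyMeasurable) ?_
    ((hρ.integrable_of_hasCompactSupport hρc).abs.mul_const _) ?_
  · refine Eventually.of_forall fun t => ae_of_all _ fun z => ?_
    rw [norm_mul, Real.norm_eq_abs]
    refine mul_le_mul_of_nonneg_left ?_ (abs_nonneg _)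
    rcases eq_or_ne t 0 with rfl | ht
    · simp only [inv_zero, zero_smul, norm_zero]
      positivity
    rw [norm_smul, norm_inv, inv_mul_le_iff₀ (norm_pos_iff.2 ht)]
    calc ‖w (x - z + t • v) - w (x - z)‖ ≤ K * ‖t • v‖ := by
          simpa using hw.norm_sub_le (x - z + t • v) (x - z)
      _ = ‖t‖ * (K * ‖v‖) := by rw [norm_smul]; ring
  · filter_upwards [hdiff] with z hz
    exact ((hz.hasFDerivAt.hasLineDerivAt v).tendsto_slope_zero).const_mul (ρ z)

theorem fderiv_fderiv_convolution_apply {u : F → ℝ} {Du : F → F} {C K : ℝ≥0} {x : F}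
    (hρ : Continuous ρ) (hρc : HasCompactSupport ρ) (hu : LipschitzWith C u)
    (hgrad : ∀ y, HasGradientAt u (Du y) y) (hDu : LipschitzWith K Du)
    (hdiff : ∀ᵐ z ∂μ, DifferentiableAt ℝ Du (x - z))
    (hφ : ContDiff ℝ 2 (ρ ⋆[lsmul ℝ ℝ, μ] u)) (v : F) :
    fderiv ℝ (fun y => fderiv ℝ (ρ ⋆[lsmul ℝ ℝ, μ] u) y v) x v
      = ∫ z, ρ z * ⟪fderiv ℝ Du (x - z) v, v⟫_ℝ ∂μ := by
  set w : F → ℝ := fun y => innerSL ℝ v (Du y)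
  have hw : LipschitzWith (‖innerSL ℝ v‖₊ * K) w := (innerSL ℝ v).lipschitz.comp hDu
  have hfirst : (fun y => fderiv ℝ (ρ ⋆[lsmul ℝ ℝ, μ] u) y v) = ρ ⋆[lsmul ℝ ℝ, μ] w := by
    ext y
    rw [fderiv_convolution_apply_of_lipschitzWith hρ hρc hu
      (ae_of_all _ fun z => (hgrad _).differentiableAt) (hφ.differentiable two_ne_zero y) v,
      convolution_lsmul]
    congr 1 with z
    simp [w, (hgrad _).hasFDerivAt.fderiv, real_inner_comm]
  have hdiff₂ : DifferentiableAt ℝ (ρ ⋆[lsmul ℝ ℝ, μ] w) x := by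
    rw [← hfirst]
    exact ((hφ.fderiv_right (m := 1) le_rfl).clm_apply contDiff_const).differentiable
      one_ne_zero x
  rw [hfirst, fderiv_convolution_apply_of_lipschitzWith hρ hρc hw
    (hdiff.mono fun z hz => (innerSL ℝ v).differentiableAt.comp _ hz) hdiff₂]
  refine integral_congr_ae (hdiff.mono fun z hz => ?_)
  have hwz : HasFDerivAt w ((innerSL ℝ v).comp (fderiv ℝ Du (x - z))) (x - z) :=
    (innerSL ℝ v).hasFDerivAt.comp _ hz.hasFDerivAt
  simp [hwz.fderiv, real_inner_comm]

end Mollification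

section Euclidean

variable {n : ℕ}

/-- `divergence (∇u) = Δu`, which is how the Laplacian of `u*` enters the equation for `λ*`. -/
noncomputable def divergence (V : EuclideanSpace ℝ (Fin n) → EuclideanSpace ℝ (Fin n))
    (x : EuclideanSpace ℝ (Fin n)) : ℝ :=
  ∑ i, ⟪fderiv ℝ V x (EuclideanSpace.single i 1), EuclideanSpace.single i 1⟫_ℝ

theorem integrable_mul_divergence_comp_sub {ρ : EuclideanSpace ℝ (Fin n) → ℝ}
    {Du : EuclideanSpace ℝ (Fin n) → EuclideanSpace ℝ (Fin n)} {K : ℝ≥0}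
    (hρ : Integrable ρ) (hDu : LipschitzWith K Du) (x : EuclideanSpace ℝ (Fin n)) :
    Integrable (fun z => ρ z * divergence Du (x - z)) := by
  simp only [divergence, Finset.mul_sum]
  exact integrable_finsetSum _ fun i _ => integrable_mul_inner_fderiv_comp_sub hρ hDu x _

theorem lap_convolution_eq_integral {ρ u : EuclideanSpace ℝ (Fin n) → ℝ}
    {Du : EuclideanSpace ℝ (Fin n) → EuclideanSpace ℝ (Fin n)} {C K : ℝ≥0}
    {x : EuclideanSpace ℝ (Fin n)}
    (hρ : Continuous ρ) (hρc : HasCompactSupport ρ) (hu : LipschitzWith C u)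
    (hgrad : ∀ y, HasGradientAt u (Du y) y) (hDu : LipschitzWith K Du)
    (hdiff : ∀ᵐ z, DifferentiableAt ℝ Du (x - z))
    (hφ : ContDiff ℝ 2 (ρ ⋆[lsmul ℝ ℝ, volume] u)) :
    lap (ρ ⋆[lsmul ℝ ℝ, volume] u) x = ∫ z, ρ z * divergence Du (x - z) := by
  simp only [lap, fderiv_fderiv_convolution_apply hρ hρc hu hgrad hDu hdiff hφ, divergence,
    Finset.mul_sum]
  exact (integral_finsetSum _ fun i _ => integrable_mul_inner_fderiv_comp_sub
    (hρ.integrable_of_hasCompactSupport hρc) hDu x _).symm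

theorem max_zero_sub_convolution_le_lap {ρ f u : EuclideanSpace ℝ (Fin n) → ℝ}
    {Du : EuclideanSpace ℝ (Fin n) → EuclideanSpace ℝ (Fin n)} {C K : ℝ≥0} {lam : ℝ}
    (hρ : Continuous ρ) (hρc : HasCompactSupport ρ) (hρ0 : ∀ z, 0 ≤ ρ z) (hρ1 : ∫ z, ρ z = 1)
    (hf : Continuous f) (hu : LipschitzWith C u) (hgrad : ∀ x, HasGradientAt u (Du x) x)
    (hDu : LipschitzWith K Du)
    (hsol : ∀ᵐ x, DifferentiableAt ℝ Du x ∧ 0 ≤ divergence Du x ∧ lam ≤ divergence Du x + f x)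
    (hφ : ContDiff ℝ 2 (ρ ⋆[lsmul ℝ ℝ, volume] u)) (x : EuclideanSpace ℝ (Fin n)) :
    max 0 (lam - (ρ ⋆[lsmul ℝ ℝ, volume] f) x) ≤ lap (ρ ⋆[lsmul ℝ ℝ, volume] u) x := by
  have hsolx := (Measure.measurePreserving_sub_left volume x).quasiMeasurePreserving.ae hsol
  rw [lap_convolution_eq_integral hρ hρc hu hgrad hDu (hsolx.mono fun z hz => hz.1) hφ]
  refine max_le (integral_nonneg_of_ae (hsolx.mono fun z hz => mul_nonneg (hρ0 z) hz.2.1)) ?_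
  have hρi : Integrable ρ := hρ.integrable_of_hasCompactSupport hρc
  have hρf : Integrable (fun z => ρ z * f (x - z)) :=
    hρc.convolutionExists_left (lsmul ℝ ℝ) hρ hf.locallyIntegrable x
  calc lam - (ρ ⋆[lsmul ℝ ℝ, volume] f) x = ∫ z, (ρ z * lam - ρ z * f (x - z)) := by
        rw [integral_sub (hρi.mul_const lam) hρf, integral_mul_const, hρ1, one_mul,
          convolution_lsmul]
        rfl
    _ ≤ ∫ z, ρ z * divergence Du (x - z) := by
        refine integral_mono_ae ((hρi.mul_const lam).sub hρf)
          (integrable_mul_divergence_comp_sub hρi hDu x) (hsolx.mono fun z hz => ?_)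
        show ρ z * lam - ρ z * f (x - z) ≤ ρ z * divergence Du (x - z)
        rw [← mul_sub]
        exact mul_le_mul_of_nonneg_left (by linarith [hz.2.2]) (hρ0 z)

theorem exists_contDiff_lap_add_ge {f u : EuclideanSpace ℝ (Fin n) → ℝ}
    {Du : EuclideanSpace ℝ (Fin n) → EuclideanSpace ℝ (Fin n)} {K : ℝ≥0} {lam ε : ℝ}
    (hf : Continuous f)
    (hfsuper : Tendsto (fun x => f x / ‖x‖) (cocompact (EuclideanSpace ℝ (Fin n))) atTop)
    (hgrad : ∀ x, HasGradientAt u (Du x) x) (hDu : LipschitzWith K Du) (hDu1 : ∀ x, ‖Du x‖ ≤ 1)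
    (hsol : ∀ᵐ x, DifferentiableAt ℝ Du x ∧ 0 ≤ divergence Du x ∧ lam ≤ divergence Du x + f x)
    (hε : 0 < ε) :
    ∃ φ : EuclideanSpace ℝ (Fin n) → ℝ, ContDiff ℝ 2 φ ∧ (∀ x, ‖gradient φ x‖ ≤ 1) ∧
      ∀ x, lam - ε ≤ lap φ x + f x := by
  obtain ⟨C, hC, hfC⟩ := mem_cocompact.1 (hfsuper.atTop_of_div_norm.eventually_ge_atTop lam)
  obtain ⟨δ, hδ, hfδ⟩ := hC.exists_forall_dist_le_of_continuous hf hε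
  let ρ : ContDiffBump (0 : EuclideanSpace ℝ (Fin n)) := ⟨δ / 2, δ, half_pos hδ, half_lt_self hδ⟩
  have hu : LipschitzWith 1 u :=
    lipschitzWith_of_hasGradientAt_of_norm_le hgrad (by simpa using hDu1)
  have hφ : ContDiff ℝ 2 (ρ.normed volume ⋆[lsmul ℝ ℝ, volume] u) :=
    ρ.hasCompactSupport_normed.contDiff_convolution_left _ ρ.contDiff_normed
      hu.continuous.locallyIntegrable
  refine ⟨ρ.normed volume ⋆[lsmul ℝ ℝ, volume] u, hφ, fun x => ?_, fun x => ?_⟩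
  · rw [gradient, LinearIsometryEquiv.norm_map]
    simpa using norm_fderiv_le_of_lipschitz ℝ (x₀ := x) (hu.convolution ρ.continuous_normed
      ρ.hasCompactSupport_normed ρ.nonneg_normed ρ.integral_normed)
  have hlap := max_le_iff.1 <| max_zero_sub_convolution_le_lap ρ.continuous_normed
    ρ.hasCompactSupport_normed ρ.nonneg_normed ρ.integral_normed hf hu hgrad hDu hsol hφ x
  by_cases hx : x ∈ C
  · have := ρ.dist_normed_convolution_le (μ := volume) hf.aestronglyMeasurable (hfδ x hx)
    linarith [(abs_le.1 (Real.dist_eq _ _ ▸ this)).2]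
  · linarith [show lam ≤ f x from hfC hx]

end Euclidean

theorem stmt17_general {n : ℕ} (f : EuclideanSpace ℝ (Fin n) → ℝ) (L lamStar : ℝ)
    (hfconv : ConvexOn ℝ Set.univ f)
    (hfsuper : Tendsto (fun x : EuclideanSpace ℝ (Fin n) => f x / ‖x‖)
      (cocompact (EuclideanSpace ℝ (Fin n))) atTop)
    -- λ* is the supremum of eigenvalues admitting a viscosity subsolution with sublinear growth
    (hlamStar : IsLUB {lam : ℝ | ∃ u : EuclideanSpace ℝ (Fin n) → ℝ,
        UpperSemicontinuous u ∧
        (∀ x₀ p X, InSuperjet u x₀ p X → max (lam - X.trace - f x₀) (‖p‖ - 1) ≤ 0) ∧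
        limsup (fun x => u x / ‖x‖) (cocompact (EuclideanSpace ℝ (Fin n))) ≤ 1} lamStar)
    -- λ* admits a convex C^{1,1} solution u* with |Du*| ≤ 1 and 0 ≤ D²u* ≤ L
    (ustar : EuclideanSpace ℝ (Fin n) → ℝ)
    (Du : EuclideanSpace ℝ (Fin n) → EuclideanSpace ℝ (Fin n))
    (hgrad : ∀ x, HasGradientAt ustar (Du x) x)
    (hDulip : LipschitzWith L.toNNReal Du)
    (hDu1 : ∀ x, ‖Du x‖ ≤ 1)
    (hsol : ∀ᵐ x : EuclideanSpace ℝ (Fin n) ∂volume, DifferentiableAt ℝ Du x ∧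
      (∀ ξ : EuclideanSpace ℝ (Fin n),
        0 ≤ ⟪fderiv ℝ Du x ξ, ξ⟫_ℝ ∧ ⟪fderiv ℝ Du x ξ, ξ⟫_ℝ ≤ L * ‖ξ‖ ^ 2) ∧
      max (lamStar - (∑ i, ⟪fderiv ℝ Du x (EuclideanSpace.single i (1:ℝ)),
        EuclideanSpace.single i (1:ℝ)⟫_ℝ) - f x) (‖Du x‖ - 1) = 0) :
    IsLUB {mu : ℝ | ∃ φ : EuclideanSpace ℝ (Fin n) → ℝ, ContDiff ℝ 2 φ ∧
      (∀ x, ‖gradient φ x‖ ≤ 1) ∧ ∀ x, mu ≤ lap φ x + f x} lamStar := by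
  refine ⟨?_, fun b hb => le_of_forall_pos_le_add fun ε hε => ?_⟩
  · rintro mu ⟨φ, hφ, hφ1, hmu⟩
    have hφd : Differentiable ℝ φ := hφ.differentiable two_ne_zero
    refine hlamStar.1 ⟨φ, hφ.continuous.upperSemicontinuous, fun x₀ p X hX => ?_, ?_⟩
    · obtain rfl := hX.eq_gradient (hφd x₀)
      exact max_le (by linarith [hmu x₀, hX.lap_le_trace hφ]) (by linarith [hφ1 x₀])
    · simpa using limsup_div_norm_le_of_lipschitzWith
        (lipschitzWith_of_hasGradientAt_of_norm_le (C := 1)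
          (fun x => (hφd x).hasGradientAt) (by simpa using hφ1))
  · have hdiv : ∀ᵐ x, DifferentiableAt ℝ Du x ∧ 0 ≤ divergence Du x ∧
        lamStar ≤ divergence Du x + f x := hsol.mono fun x hx =>
      ⟨hx.1, Finset.sum_nonneg fun i _ => (hx.2.1 _).1,
        by rw [divergence]; linarith [(le_max_left _ _).trans hx.2.2.le]⟩
    obtain ⟨φ, hφ, hφ1, hφf⟩ := exists_contDiff_lap_add_ge
      (hfconv.continuousOn isOpen_univ |> continuousOn_univ.1) hfsuper hgrad hDulip hDu1 hdiv hε
    linarith [hb ⟨φ, hφ, hφ1, hφf⟩]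

theorem stmt17 {n : ℕ} (f : EuclideanSpace ℝ (Fin n) → ℝ) (L lamStar : ℝ)
    (hL : 0 ≤ L)
    (hfconv : ConvexOn ℝ Set.univ f)
    (hfsuper : Tendsto (fun x : EuclideanSpace ℝ (Fin n) => f x / ‖x‖)
      (cocompact (EuclideanSpace ℝ (Fin n))) atTop)
    -- λ* is the supremum of eigenvalues admitting a viscosity subsolution with sublinear growth
    (hlamStar : IsLUB {lam : ℝ | ∃ u : EuclideanSpace ℝ (Fin n) → ℝ,
        UpperSemicontinuous u ∧
        (∀ x₀ p X, InSuperjet u x₀ p X → max (lam - X.trace - f x₀) (‖p‖ - 1) ≤ 0) ∧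
        limsup (fun x => u x / ‖x‖) (cocompact (EuclideanSpace ℝ (Fin n))) ≤ 1} lamStar)
    -- λ* admits a convex C^{1,1} solution u* with |Du*| ≤ 1 and 0 ≤ D²u* ≤ L
    (ustar : EuclideanSpace ℝ (Fin n) → ℝ)
    (Du : EuclideanSpace ℝ (Fin n) → EuclideanSpace ℝ (Fin n))
    (hconv : ConvexOn ℝ Set.univ ustar)
    (hgrad : ∀ x, HasGradientAt ustar (Du x) x)
    (hDulip : LipschitzWith L.toNNReal Du)
    (hDu1 : ∀ x, ‖Du x‖ ≤ 1)
    (hsol : ∀ᵐ x : EuclideanSpace ℝ (Fin n) ∂volume, DifferentiableAt ℝ Du x ∧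
      (∀ ξ : EuclideanSpace ℝ (Fin n),
        0 ≤ ⟪fderiv ℝ Du x ξ, ξ⟫_ℝ ∧ ⟪fderiv ℝ Du x ξ, ξ⟫_ℝ ≤ L * ‖ξ‖ ^ 2) ∧
      max (lamStar - (∑ i, ⟪fderiv ℝ Du x (EuclideanSpace.single i (1:ℝ)),
        EuclideanSpace.single i (1:ℝ)⟫_ℝ) - f x) (‖Du x‖ - 1) = 0) :
    IsLUB {mu : ℝ | ∃ φ : EuclideanSpace ℝ (Fin n) → ℝ, ContDiff ℝ 2 φ ∧
      (∀ x, ‖gradient φ x‖ ≤ 1) ∧ ∀ x, mu ≤ lap φ x + f x} lamStar :=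
  stmt17_general f L lamStar hfconv hfsuper hlamStar ustar Du hgrad hDulip hDu1 hsol
end

section
/- Let f : ℝⁿ → ℝ be convex, superlinear, and nonnegative, and suppose ψ* ∈ C²(ℝⁿ) is a classical supersolution of max{λ* − Δψ* − f, |Dψ*| − 1} = 0 with liminf_{|x|→∞} ψ*(x)/|x| ≥ 1. Define λ_+ = inf over ψ ∈ C²(ℝⁿ) with liminf ψ(x)/|x| ≥ 1 of sup_{x : |Dψ(x)| < 1}(Δψ(x) + f(x)). Then λ_+ ≤ λ*, where λ* satisfies λ* ≤ τ^ψ for all admissible ψ (τ^ψ being the sup in the definition). Consequently λ* = λ_+. -/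
open Filter
open scoped Topology

theorem lap_add_le_of_supersolution {n : ℕ} {f ψ : EuclideanSpace ℝ (Fin n) → ℝ} {lam : ℝ}
    (hsup : ∀ x, 0 ≤ max (lam - lap ψ x - f x) (‖gradient ψ x‖ - 1))
    {x : EuclideanSpace ℝ (Fin n)} (hx : ‖gradient ψ x‖ < 1) :
    lap ψ x + f x ≤ lam := by
  rcases le_max_iff.mp (hsup x) with h | h <;> linarith

theorem stmt18_general {n : ℕ} (f : EuclideanSpace ℝ (Fin n) → ℝ) (lamStar : ℝ)
    (ψstar : EuclideanSpace ℝ (Fin n) → ℝ) (hψ : ContDiff ℝ 2 ψstar)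
    (hψsup : ∀ x, 0 ≤ max (lamStar - lap ψstar x - f x) (‖gradient ψstar x‖ - 1))
    (hψgrow : 1 ≤ liminf (fun x => ψstar x / ‖x‖)
      (cocompact (EuclideanSpace ℝ (Fin n))))
    (T : Set ℝ)
    (hT : T = {τ : ℝ | ∃ ψ : EuclideanSpace ℝ (Fin n) → ℝ, ContDiff ℝ 2 ψ ∧
        1 ≤ liminf (fun x => ψ x / ‖x‖) (cocompact (EuclideanSpace ℝ (Fin n))) ∧
        ∀ x, ‖gradient ψ x‖ < 1 → lap ψ x + f x ≤ τ})
    (hstar : ∀ τ ∈ T, lamStar ≤ τ)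
    (lamPlus : ℝ) (hPlus : IsGLB T lamPlus) :
    lamPlus ≤ lamStar ∧ lamStar = lamPlus := by
  have hmem : lamStar ∈ T := by
    rw [hT]
    exact ⟨ψstar, hψ, hψgrow, fun _ hx => lap_add_le_of_supersolution hψsup hx⟩
  have hle : lamPlus ≤ lamStar := hPlus.1 hmem
  exact ⟨hle, le_antisymm (hPlus.2 hstar) hle⟩

theorem stmt18 {n : ℕ} (f : EuclideanSpace ℝ (Fin n) → ℝ) (lamStar : ℝ)
    (hfconv : ConvexOn ℝ Set.univ f) (hfnn : ∀ x, 0 ≤ f x)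
    (hfsuper : Tendsto (fun x : EuclideanSpace ℝ (Fin n) => f x / ‖x‖)
      (cocompact (EuclideanSpace ℝ (Fin n))) atTop)
    (ψstar : EuclideanSpace ℝ (Fin n) → ℝ) (hψ : ContDiff ℝ 2 ψstar)
    (hψsup : ∀ x, 0 ≤ max (lamStar - lap ψstar x - f x) (‖gradient ψstar x‖ - 1))
    (hψgrow : 1 ≤ liminf (fun x => ψstar x / ‖x‖)
      (cocompact (EuclideanSpace ℝ (Fin n))))
    (T : Set ℝ)
    (hT : T = {τ : ℝ | ∃ ψ : EuclideanSpace ℝ (Fin n) → ℝ, ContDiff ℝ 2 ψ ∧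
        1 ≤ liminf (fun x => ψ x / ‖x‖) (cocompact (EuclideanSpace ℝ (Fin n))) ∧
        ∀ x, ‖gradient ψ x‖ < 1 → lap ψ x + f x ≤ τ})
    (hstar : ∀ τ ∈ T, lamStar ≤ τ)
    (lamPlus : ℝ) (hPlus : IsGLB T lamPlus) :
    lamPlus ≤ lamStar ∧ lamStar = lamPlus :=
  stmt18_general f lamStar ψstar hψ hψsup hψgrow T hT hstar lamPlus hPlus
end
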